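/- arXiv:2510.21421 — 2 statements merged into one kernel-verified Lean document; each statement's English description precedes it below -/
import Mathlib

section
/- Let D : ℝ^n → ℝ^n be β⁻¹-Lipschitz (β ∈ (0,1)) and equal to ∇ψ for a Fréchet differentiable convex ψ : ℝ^n → ℝ. Define φ := ψ* − (1/2)‖·‖². Then for every x ∈ ℝ^n, the function y ↦ φ(y) + (1/2)‖x − y‖² has the unique minimizer D(x); that is, D = s-Prox_φ. -/
open scoped RealInnerProductSpace

/-- The Fenchel conjugate `ψ*(z) = sup_x (⟪x, z⟫ − ψ(x))`, valued in the extended reals. -/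
noncomputable def fenchelConj {n : ℕ} (ψ : EuclideanSpace ℝ (Fin n) → ℝ)
    (z : EuclideanSpace ℝ (Fin n)) : EReal :=
  ⨆ x : EuclideanSpace ℝ (Fin n), ((⟪x, z⟫ - ψ x : ℝ) : EReal)

open InnerProductSpace in
lemma grad_conv_ineq {n : ℕ} {ψ : EuclideanSpace ℝ (Fin n) → ℝ}
    {g x : EuclideanSpace ℝ (Fin n)}
    (hconv : ConvexOn ℝ Set.univ ψ) (hg : HasGradientAt ψ g x)
    (z : EuclideanSpace ℝ (Fin n)) : ψ x + ⟪g, z - x⟫ ≤ ψ z := by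
  set γ : ℝ → EuclideanSpace ℝ (Fin n) := fun t => t • (z - x) + x with hγdef
  have hγ0 : γ 0 = x := by simp [hγdef]
  have hγ1 : γ 1 = z := by simp [hγdef]
  have hγd : HasDerivAt γ (z - x) 0 := by
    simpa [hγdef] using ((hasDerivAt_id (0 : ℝ)).smul_const (z - x)).add_const x
  have hf : HasFDerivAt ψ (toDual ℝ (EuclideanSpace ℝ (Fin n)) g) x := hg.hasFDerivAt
  rw [← hγ0] at hf
  have hcomp : HasDerivAt (fun t => ψ (γ t)) ⟪g, z - x⟫ 0 := by
    simpa [InnerProductSpace.toDual_apply_apply, Function.comp_def] using hf.comp_hasDerivAt 0 hγd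
  have hconvγ : ConvexOn ℝ Set.univ (fun t => ψ (γ t)) := by
    have h2 := hconv.comp_affineMap
      (AffineMap.lineMap x z : ℝ →ᵃ[ℝ] EuclideanSpace ℝ (Fin n))
    have heq : (ψ ∘ (AffineMap.lineMap x z : ℝ →ᵃ[ℝ] EuclideanSpace ℝ (Fin n)))
        = fun t => ψ (γ t) := by
      funext t
      simp [AffineMap.lineMap_apply, hγdef, Function.comp, vsub_eq_sub, vadd_eq_add]
    rw [← heq]
    simpa using h2
  have hslope := hconvγ.le_slope_of_hasDerivAt (Set.mem_univ (0:ℝ)) (Set.mem_univ 1)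
    one_pos hcomp
  rw [slope_def_field] at hslope
  simp only [hγ0, hγ1, sub_zero, div_one] at hslope
  linarith

/-- MoL-Grad, direction (b) ⇒ (a): if `D` is `β⁻¹`-Lipschitz and `D = ∇ψ` for a
differentiable convex `ψ`, then with `φ := ψ* − (1/2)‖·‖²`, for every `x` the map
`y ↦ φ(y) + (1/2)‖x − y‖²` has `D(x)` as its unique minimizer, i.e. `D = s-Prox_φ`. -/

theorem molgrad_is_sprox
    {n : ℕ} (ψ : EuclideanSpace ℝ (Fin n) → ℝ)
    (D : EuclideanSpace ℝ (Fin n) → EuclideanSpace ℝ (Fin n))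
    (β : ℝ) (hβ : β ∈ Set.Ioo (0 : ℝ) 1)
    (hconv : ConvexOn ℝ Set.univ ψ)
    (hgrad : ∀ x, HasGradientAt ψ (D x) x)
    (hlip : ∀ x y, ‖D x - D y‖ ≤ β⁻¹ * ‖x - y‖)
    (φ : EuclideanSpace ℝ (Fin n) → EReal)
    (hφ : ∀ z, φ z = fenchelConj ψ z - (((1 : ℝ)/2) * ‖z‖^2 : ℝ)) :
    ∀ x : EuclideanSpace ℝ (Fin n),
      (∀ y, φ (D x) + (((1 : ℝ)/2) * ‖x - D x‖^2 : ℝ)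
          ≤ φ y + (((1 : ℝ)/2) * ‖x - y‖^2 : ℝ)) ∧
      ∀ y, (∀ y', φ y + (((1 : ℝ)/2) * ‖x - y‖^2 : ℝ)
          ≤ φ y' + (((1 : ℝ)/2) * ‖x - y'‖^2 : ℝ)) → y = D x := by
  intro x
  have hle : ∀ w z : EuclideanSpace ℝ (Fin n),
      ((⟪w, z⟫ - ψ w : ℝ) : EReal) ≤ fenchelConj ψ z :=
    fun w z => le_iSup (fun w => ((⟪w, z⟫ - ψ w : ℝ) : EReal)) w
  -- the conjugate at D x
  have hSDx : fenchelConj ψ (D x) = ((⟪x, D x⟫ - ψ x : ℝ) : EReal) := by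
    refine le_antisymm (iSup_le fun z => ?_) (hle x (D x))
    rw [EReal.coe_le_coe_iff]
    have h1 := grad_conv_ineq hconv (hgrad x) z
    have h2 : ⟪D x, z - x⟫ = ⟪z, D x⟫ - ⟪x, D x⟫ := by
      rw [inner_sub_right, real_inner_comm z (D x), real_inner_comm x (D x)]
    linarith
  -- rewrite the objective
  have hobj : ∀ y, φ y + (((1 : ℝ)/2) * ‖x - y‖^2 : ℝ)
      = fenchelConj ψ y + ((-⟪x, y⟫ + (1 : ℝ)/2 * ‖x‖^2 : ℝ) : EReal) := by
    intro y
    have hnorm : (1 : ℝ)/2 * ‖x - y‖^2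
        = -⟪x, y⟫ + (1 : ℝ)/2 * ‖x‖^2 + (1 : ℝ)/2 * ‖y‖^2 := by
      have := @norm_sub_sq_real (EuclideanSpace ℝ (Fin n)) _ _ x y
      linarith
    rw [hφ y]
    by_cases h : fenchelConj ψ y = ⊤
    · rw [h, EReal.top_sub_coe, EReal.top_add_coe, EReal.top_add_coe]
    · have hbot : fenchelConj ψ y ≠ ⊥ := fun hb => by
        have h2 := hb ▸ hle x y
        rw [le_bot_iff] at h2
        exact EReal.coe_ne_bot _ h2
      obtain ⟨a, ha⟩ : ∃ a : ℝ, fenchelConj ψ y = (a : EReal) :=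
        ⟨(fenchelConj ψ y).toReal, (EReal.coe_toReal h hbot).symm⟩
      rw [ha, ← EReal.coe_sub, ← EReal.coe_add, ← EReal.coe_add,
        EReal.coe_eq_coe_iff]
      linarith
  have hval : ∀ y : EuclideanSpace ℝ (Fin n),
      (((⟪x, y⟫ - ψ x : ℝ)) : EReal) + ((-⟪x, y⟫ + (1 : ℝ)/2 * ‖x‖^2 : ℝ) : EReal)
        = ((-ψ x + (1 : ℝ)/2 * ‖x‖^2 : ℝ) : EReal) := by
    intro y
    rw [← EReal.coe_add, EReal.coe_eq_coe_iff]
    ring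
  constructor
  · intro y
    rw [hobj (D x), hobj y, hSDx, hval (D x)]
    calc ((-ψ x + (1 : ℝ)/2 * ‖x‖^2 : ℝ) : EReal)
        = (((⟪x, y⟫ - ψ x : ℝ)) : EReal) + ((-⟪x, y⟫ + (1 : ℝ)/2 * ‖x‖^2 : ℝ) : EReal) :=
          (hval y).symm
      _ ≤ fenchelConj ψ y + ((-⟪x, y⟫ + (1 : ℝ)/2 * ‖x‖^2 : ℝ) : EReal) :=
          add_le_add_left (hle x y) _
  · intro y hy
    have h1 := hy (D x)
    rw [hobj y, hobj (D x), hSDx, hval (D x)] at h1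
    have htop : fenchelConj ψ y ≠ ⊤ := by
      intro h
      rw [h, EReal.top_add_coe] at h1
      exact EReal.coe_ne_top _ (top_le_iff.mp h1)
    have hbot : fenchelConj ψ y ≠ ⊥ := fun hb => by
      have h2 := hb ▸ hle x y
      rw [le_bot_iff] at h2
      exact EReal.coe_ne_bot _ h2
    obtain ⟨a, ha⟩ : ∃ a : ℝ, fenchelConj ψ y = (a : EReal) :=
      ⟨(fenchelConj ψ y).toReal, (EReal.coe_toReal htop hbot).symm⟩
    rw [ha, ← EReal.coe_add, EReal.coe_le_coe_iff] at h1
    -- x is a global minimizer of z ↦ ψ z - ⟪z, y⟫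
    have hmin : ∀ z, ψ x - ⟪x, y⟫ ≤ ψ z - ⟪z, y⟫ := by
      intro z
      have hz : ((⟪z, y⟫ - ψ z : ℝ) : EReal) ≤ (a : EReal) := ha ▸ hle z y
      rw [EReal.coe_le_coe_iff] at hz
      have hx : ((⟪x, y⟫ - ψ x : ℝ) : EReal) ≤ (a : EReal) := ha ▸ hle x y
      rw [EReal.coe_le_coe_iff] at hx
      linarith
    have hgd : HasFDerivAt (fun z => ψ z - ⟪z, y⟫)
        (InnerProductSpace.toDual ℝ (EuclideanSpace ℝ (Fin n)) (D x - y)) x := by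
      have hψ := (hgrad x).hasFDerivAt
      have hin : HasFDerivAt (fun z : EuclideanSpace ℝ (Fin n) => ⟪z, y⟫)
          (InnerProductSpace.toDual ℝ (EuclideanSpace ℝ (Fin n)) y) x := by
        have h0 := (InnerProductSpace.toDual ℝ (EuclideanSpace ℝ (Fin n)) y).hasFDerivAt
          (x := x)
        apply h0.congr_of_eventuallyEq
        filter_upwards with z
        simp [InnerProductSpace.toDual_apply_apply, real_inner_comm, mul_comm]
      rw [map_sub]
      exact hψ.sub hin
    have hloc : IsLocalMin (fun z => ψ z - ⟪z, y⟫) x :=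
      Filter.Eventually.of_forall hmin
    have hzero := hloc.hasFDerivAt_eq_zero hgd
    have : D x - y = 0 :=
      (InnerProductSpace.toDual ℝ (EuclideanSpace ℝ (Fin n))).map_eq_zero_iff.mp hzero
    have := sub_eq_zero.mp this
    exact this.symm
end

section
/- Conversely, suppose D = s-Prox_φ for some φ : ℝ^n → (−∞, +∞] with φ + ((1−β)/2)‖·‖² proper lsc convex, β ∈ (0,1). Then D is β⁻¹-Lipschitz continuous and D = ∇ψ for some Fréchet differentiable convex ψ; explicitly ψ = (φ + (1/2)‖·‖²)*. -/
open scoped RealInnerProductSpace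

lemma combo_sq {F : Type*} [NormedAddCommGroup F] [InnerProductSpace ℝ F]
    (a b : ℝ) (hab : a + b = 1) (p q : F) :
    ‖a•p + b•q‖^2 = a*‖p‖^2 + b*‖q‖^2 - a*b*‖p-q‖^2 := by
  have hb : b = 1 - a := by linarith
  subst hb
  rw [← real_inner_self_eq_norm_sq, ← real_inner_self_eq_norm_sq,
    ← real_inner_self_eq_norm_sq, ← real_inner_self_eq_norm_sq]
  simp only [inner_add_left, inner_add_right, inner_sub_left, inner_sub_right,
    real_inner_smul_left, real_inner_smul_right, real_inner_comm q p]
  ring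

set_option maxHeartbeats 1600000 in
/-- MoL-Grad, direction (a) ⇒ (b): if `D = s-Prox_φ` for a `(1−β)`-weakly convex `φ`
(`β ∈ (0,1)`), i.e. `φ + ((1−β)/2)‖·‖²` is proper lsc convex and for every `x` the map
`y ↦ φ(y) + (1/2)‖x−y‖²` has `D(x)` as unique minimizer, then `D` is `β⁻¹`-Lipschitz
and `D = ∇ψ` for a differentiable convex `ψ`, explicitly `ψ = (φ + (1/2)‖·‖²)*`. -/
theorem sprox_is_molgrad
    {n : ℕ} (D : EuclideanSpace ℝ (Fin n) → EuclideanSpace ℝ (Fin n))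
    (β : ℝ) (hβ : β ∈ Set.Ioo (0 : ℝ) 1)
    (φ : EuclideanSpace ℝ (Fin n) → EReal)
    (hproper : (∀ z, φ z ≠ ⊥) ∧ ∃ z, φ z ≠ ⊤)
    (hlsc : LowerSemicontinuous fun z => φ z + (((1 - β)/2 * ‖z‖^2 : ℝ) : EReal))
    (hconv : ∀ (x y : EuclideanSpace ℝ (Fin n)) (a b : ℝ), 0 ≤ a → 0 ≤ b → a + b = 1 →
      φ (a • x + b • y) + (((1 - β)/2 * ‖a • x + b • y‖^2 : ℝ) : EReal)
        ≤ (a : EReal) * (φ x + (((1 - β)/2 * ‖x‖^2 : ℝ) : EReal))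
          + (b : EReal) * (φ y + (((1 - β)/2 * ‖y‖^2 : ℝ) : EReal)))
    (hD : ∀ x : EuclideanSpace ℝ (Fin n),
      (∀ y, φ (D x) + (((1 : ℝ)/2) * ‖x - D x‖^2 : ℝ)
          ≤ φ y + (((1 : ℝ)/2) * ‖x - y‖^2 : ℝ)) ∧
      ∀ y, (∀ y', φ y + (((1 : ℝ)/2) * ‖x - y‖^2 : ℝ)
          ≤ φ y' + (((1 : ℝ)/2) * ‖x - y'‖^2 : ℝ)) → y = D x) :
    (∀ x y, ‖D x - D y‖ ≤ β⁻¹ * ‖x - y‖) ∧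
      ∃ ψ : EuclideanSpace ℝ (Fin n) → ℝ,
        ConvexOn ℝ Set.univ ψ ∧ (∀ x, HasGradientAt ψ (D x) x) ∧
        ∀ x, (ψ x : EReal) =
          ⨆ y : EuclideanSpace ℝ (Fin n),
            (((⟪y, x⟫ : ℝ)) : EReal) - (φ y + (((1 : ℝ)/2) * ‖y‖^2 : ℝ)) := by
  obtain ⟨hβ0, hβ1⟩ := hβ
  obtain ⟨hbot, z₀, hz₀⟩ := hproper
  set fφ : EuclideanSpace ℝ (Fin n) → ℝ := fun v => (φ v).toReal with hfφ
  -- φ is finite at every D x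
  have hDfin : ∀ x, φ (D x) ≠ ⊤ := by
    intro x hx
    have h := (hD x).1 z₀
    rw [hx, EReal.top_add_coe] at h
    rw [top_le_iff] at h
    exact (EReal.add_lt_top hz₀ (EReal.coe_ne_top _)).ne h
  -- real form of the prox optimality
  have hopt : ∀ x y, φ y ≠ ⊤ →
      fφ (D x) + 1/2*‖x - D x‖^2 ≤ fφ y + 1/2*‖x - y‖^2 := by
    intro x y hy
    have h := (hD x).1 y
    rw [← EReal.coe_toReal (hDfin x) (hbot _), ← EReal.coe_toReal hy (hbot _)] at h
    exact_mod_cast h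
  -- real form of weak convexity
  have hcvx : ∀ (z u : EuclideanSpace ℝ (Fin n)) (a : ℝ), 0 ≤ a → a ≤ 1 →
      φ z ≠ ⊤ → φ u ≠ ⊤ →
      φ (a•z + (1-a)•u) ≠ ⊤ ∧
      fφ (a•z + (1-a)•u) + (1-β)/2*‖a•z + (1-a)•u‖^2
        ≤ a*(fφ z + (1-β)/2*‖z‖^2) + (1-a)*(fφ u + (1-β)/2*‖u‖^2) := by
    intro z u a ha ha1 hz hu
    have h := hconv z u a (1-a) ha (by linarith) (by ring)
    rw [← EReal.coe_toReal hz (hbot _), ← EReal.coe_toReal hu (hbot _)] at h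
    norm_cast at h
    have hwt : φ (a•z+(1-a)•u) ≠ ⊤ := by
      intro hw
      rw [hw, EReal.top_add_coe, top_le_iff] at h
      exact EReal.coe_ne_top _ h
    refine ⟨hwt, ?_⟩
    rw [← EReal.coe_toReal hwt (hbot _)] at h
    norm_cast at h
  -- growth inequality from strong convexity of the prox objective
  have hgrow : ∀ x z, φ z ≠ ⊤ →
      fφ (D x) + 1/2*‖x - D x‖^2 + β/2*‖z - D x‖^2 ≤ fφ z + 1/2*‖x - z‖^2 := by
    intro x z hz
    set u := D x with hu'
    have hu : φ u ≠ ⊤ := hDfin x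
    have key : ∀ a : ℝ, 0 < a → a < 1 →
        fφ u + 1/2*‖x-u‖^2 + β/2*((1-a)*‖z-u‖^2) ≤ fφ z + 1/2*‖x-z‖^2 := by
      intro a ha0 ha1
      obtain ⟨hwt, hcw⟩ := hcvx z u a ha0.le ha1.le hz hu
      set w := a•z + (1-a)•u with hw
      have hoptw := hopt x w hwt
      have hxw : x - w = a • (x - z) + (1-a) • (x - u) := by
        rw [hw]; module
      have e1 : ‖x - w‖^2 = a*‖x-z‖^2 + (1-a)*‖x-u‖^2 - a*(1-a)*‖z-u‖^2 := by
        rw [hxw, combo_sq a (1-a) (by ring)]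
        have h9 : (x - z) - (x - u) = -(z - u) := by abel
        rw [h9, norm_neg]
      have e2 : ‖w‖^2 = a*‖z‖^2 + (1-a)*‖u‖^2 - a*(1-a)*‖z-u‖^2 :=
        combo_sq a (1-a) (by ring) z u
      rw [e1] at hoptw
      rw [e2] at hcw
      nlinarith [hoptw, hcw, ha0, ha1]
    have hc : Continuous (fun a : ℝ => fφ u + 1/2*‖x-u‖^2 + β/2*((1-a)*‖z-u‖^2)) := by
      fun_prop
    have hT := (hc.tendsto 0).mono_left (nhdsWithin_le_nhds (s := Set.Ioi (0:ℝ)))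
    have hev : ∀ᶠ a in nhdsWithin (0:ℝ) (Set.Ioi 0),
        fφ u + 1/2*‖x-u‖^2 + β/2*((1-a)*‖z-u‖^2) ≤ fφ z + 1/2*‖x-z‖^2 := by
      filter_upwards [Ioo_mem_nhdsGT_of_mem (by norm_num : (0:ℝ) ∈ Set.Ico 0 1)] with a ha
      exact key a ha.1 ha.2
    have := le_of_tendsto hT hev
    simpa using this
  -- cocoercivity
  have hmono : ∀ x y, β*‖D x - D y‖^2 ≤ ⟪x - y, D x - D y⟫ := by
    intro x y
    have h1 := hgrow x (D y) (hDfin y)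
    have h2 := hgrow y (D x) (hDfin x)
    have e1 : ‖x - D x‖^2 = ‖x‖^2 - 2*⟪x, D x⟫ + ‖D x‖^2 := norm_sub_sq_real x (D x)
    have e2 : ‖x - D y‖^2 = ‖x‖^2 - 2*⟪x, D y⟫ + ‖D y‖^2 := norm_sub_sq_real x (D y)
    have e3 : ‖y - D y‖^2 = ‖y‖^2 - 2*⟪y, D y⟫ + ‖D y‖^2 := norm_sub_sq_real y (D y)
    have e4 : ‖y - D x‖^2 = ‖y‖^2 - 2*⟪y, D x⟫ + ‖D x‖^2 := norm_sub_sq_real y (D x)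
    have e0 : ‖D y - D x‖ = ‖D x - D y‖ := norm_sub_rev _ _
    have einner : ⟪x - y, D x - D y⟫ = ⟪x, D x⟫ - ⟪x, D y⟫ - ⟪y, D x⟫ + ⟪y, D y⟫ := by
      simp only [inner_sub_left, inner_sub_right]; ring
    rw [e0] at h1
    linarith
  have hlip : ∀ x y, ‖D x - D y‖ ≤ β⁻¹ * ‖x - y‖ := by
    intro x y
    have h1 := hmono x y
    have h2 := real_inner_le_norm (x - y) (D x - D y)
    rcases eq_or_lt_of_le (norm_nonneg (D x - D y)) with h | h
    · rw [← h]; positivity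
    · rw [inv_mul_eq_div, le_div_iff₀ hβ0]
      nlinarith [h1, h2, h]
  set ψ : EuclideanSpace ℝ (Fin n) → ℝ :=
    fun x => ⟪x, D x⟫ - (fφ (D x) + 1/2*‖D x‖^2) with hψ
  -- subgradient inequality
  have hsub : ∀ x z, ψ x + ⟪D x, z - x⟫ ≤ ψ z := by
    intro x z
    have h := hopt z (D x) (hDfin x)
    have e1 : ‖z - D z‖^2 = ‖z‖^2 - 2*⟪z, D z⟫ + ‖D z‖^2 := norm_sub_sq_real _ _
    have e2 : ‖z - D x‖^2 = ‖z‖^2 - 2*⟪z, D x⟫ + ‖D x‖^2 := norm_sub_sq_real _ _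
    have e3 : ⟪D x, z - x⟫ = ⟪z, D x⟫ - ⟪x, D x⟫ := by
      rw [inner_sub_right, real_inner_comm (D x) z, real_inner_comm (D x) x]
    simp only [hψ]
    linarith
  have hconvψ : ConvexOn ℝ Set.univ ψ := by
    refine ⟨convex_univ, ?_⟩
    intro x _ y _ a b ha hb hab
    have h1 := hsub (a•x + b•y) x
    have h2 := hsub (a•x + b•y) y
    set w := a•x + b•y with hwdef
    have hw2 : ⟪D w, w⟫ = a*⟪D w, x⟫ + b*⟪D w, y⟫ := by
      rw [hwdef, inner_add_right, real_inner_smul_right, real_inner_smul_right]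
    have e0 : a * ⟪D w, x - w⟫ + b * ⟪D w, y - w⟫ = 0 := by
      rw [inner_sub_right, inner_sub_right, hw2]
      linear_combination (-(a*⟪D w, x⟫ + b*⟪D w, y⟫)) * hab
    have m1 := mul_le_mul_of_nonneg_left h1 ha
    have m2 := mul_le_mul_of_nonneg_left h2 hb
    have hsum : a*ψ w + b*ψ w = ψ w := by
      linear_combination (ψ w) * hab
    simp only [smul_eq_mul]
    nlinarith [m1, m2, e0, hsum]
  have hgrad : ∀ x, HasGradientAt ψ (D x) x := by
    intro x
    rw [hasGradientAt_iff_hasFDerivAt, hasFDerivAt_iff_isLittleO_nhds_zero]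
    rw [Asymptotics.isLittleO_iff]
    intro c hc
    have hcb : (0:ℝ) < c * β := mul_pos hc hβ0
    filter_upwards [Metric.ball_mem_nhds (0 : EuclideanSpace ℝ (Fin n)) hcb] with h hh
    rw [Metric.mem_ball, dist_zero_right] at hh
    have hd : (InnerProductSpace.toDual ℝ (EuclideanSpace ℝ (Fin n)) (D x)) h = ⟪D x, h⟫ :=
      InnerProductSpace.toDual_apply_apply
    have hlo : ψ x + ⟪D x, h⟫ ≤ ψ (x + h) := by
      have := hsub x (x + h)
      simpa using this
    have hhi : ψ (x + h) - ψ x ≤ ⟪D (x + h), h⟫ := by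
      have := hsub (x + h) x
      have e : ⟪D (x+h), x - (x+h)⟫ = -⟪D (x+h), h⟫ := by
        rw [show x - (x+h) = -h by abel, inner_neg_right]
      rw [e] at this
      linarith
    have hup : ψ (x + h) - ψ x - ⟪D x, h⟫ ≤ ⟪D (x+h) - D x, h⟫ := by
      rw [inner_sub_left]; linarith
    have hbnd : ⟪D (x+h) - D x, h⟫ ≤ (β⁻¹ * ‖h‖) * ‖h‖ := by
      have h5 := real_inner_le_norm (D (x+h) - D x) h
      have hl := hlip (x + h) x
      have e : x + h - x = h := by abel
      rw [e] at hl
      calc ⟪D (x+h) - D x, h⟫ ≤ ‖D (x+h) - D x‖ * ‖h‖ := h5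
        _ ≤ (β⁻¹ * ‖h‖) * ‖h‖ := mul_le_mul_of_nonneg_right hl (norm_nonneg h)
    rw [hd, Real.norm_eq_abs, abs_of_nonneg (by linarith)]
    have h6 : β⁻¹ * ‖h‖ ≤ c := by
      have h7 : β⁻¹ * ‖h‖ ≤ β⁻¹ * (c * β) :=
        mul_le_mul_of_nonneg_left hh.le (inv_pos.2 hβ0).le
      have h8 : β⁻¹ * (c * β) = c := by
        rw [mul_comm c β, ← mul_assoc, inv_mul_cancel₀ hβ0.ne', one_mul]
      linarith
    have h9 : (β⁻¹ * ‖h‖) * ‖h‖ ≤ c * ‖h‖ :=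
      mul_le_mul_of_nonneg_right h6 (norm_nonneg h)
    linarith
  refine ⟨hlip, ψ, hconvψ, hgrad, ?_⟩
  intro x
  apply le_antisymm
  · have hval : ((⟪D x, x⟫ : ℝ) : EReal) - (φ (D x) + (((1:ℝ)/2) * ‖D x‖^2 : ℝ))
        = (ψ x : EReal) := by
      rw [← EReal.coe_toReal (hDfin x) (hbot _)]
      rw [show ((φ (D x)).toReal : EReal) + (((1:ℝ)/2) * ‖D x‖^2 : ℝ)
          = (((φ (D x)).toReal + (1:ℝ)/2 * ‖D x‖^2 : ℝ) : EReal) by push_cast; ring]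
      rw [← EReal.coe_sub, EReal.coe_eq_coe_iff]
      simp only [hψ]
      rw [real_inner_comm]
    rw [← hval]
    exact le_iSup (fun y => ((⟪y, x⟫ : ℝ) : EReal) - (φ y + (((1:ℝ)/2) * ‖y‖^2 : ℝ))) (D x)
  · apply iSup_le
    intro y
    by_cases hy : φ y = ⊤
    · rw [hy, EReal.top_add_coe]
      simp
    · have h := hopt x y hy
      rw [← EReal.coe_toReal hy (hbot _)]
      rw [show (((φ y).toReal : ℝ) : EReal) + (((1:ℝ)/2) * ‖y‖^2 : ℝ)
          = ((((φ y).toReal + (1:ℝ)/2 * ‖y‖^2 : ℝ)) : EReal) by push_cast; ring]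
      rw [← EReal.coe_sub, EReal.coe_le_coe_iff]
      have e1 : ‖x - D x‖^2 = ‖x‖^2 - 2*⟪x, D x⟫ + ‖D x‖^2 := norm_sub_sq_real _ _
      have e2 : ‖x - y‖^2 = ‖x‖^2 - 2*⟪x, y⟫ + ‖y‖^2 := norm_sub_sq_real _ _
      have e3 : ⟪y, x⟫ = ⟪x, y⟫ := real_inner_comm _ _
      simp only [hψ]
      linarith
end
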